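/- Let p,q ≥ 1 and let π ∈ S_ann-nc(p,q), with π₀ := π|_{Π(τ_{p,q})}. Then the set of elements lying in bridges of Kr_{p,q}(π) = π⁻¹τ_{p,q} (respectively of Kr_{p,q}⁻¹(π) = τ_{p,q}π⁻¹) is the union of exactly two orbits of Kr_{p,q}(π₀) (respectively of Kr_{p,q}⁻¹(π₀)), one contained in [p] and one contained in [p+1,p+q] (these are called the outside faces). Moreover, in the Kr⁻¹ version, every a ∈ [p] with π⁻¹(a) ∈ [p+1,p+q] and every a ∈ [p+1,p+q] with π⁻¹(a) ∈ [p] lies in this set. -/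

import Mathlib

namespace AnnNC

/-- The orbit ("same cycle") setoid of a permutation. -/
def orbitSetoid {α : Type*} (σ : Equiv.Perm α) : Setoid α :=
  ⟨σ.SameCycle, ⟨fun x => Equiv.Perm.SameCycle.refl σ x,
    fun h => h.symm, fun h h' => h.trans h'⟩⟩

/-- Number of orbits (cycles, counting fixed points) of a permutation. -/
noncomputable def numOrbits {α : Type*} (σ : Equiv.Perm α) : ℕ :=
  Nat.card (Quotient (orbitSetoid σ))

/-- Number of blocks of the join `Π(σ) ∨ Π(ρ)` of the orbit partitions. -/
noncomputable def numJoin {α : Type*} (σ ρ : Equiv.Perm α) : ℕ :=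
  Nat.card (Quotient (orbitSetoid σ ⊔ orbitSetoid ρ))

/-- Euler characteristic `χ_ρ(π) = #(ρ) + #(π) + #(π⁻¹ρ) − n`. -/
noncomputable def euler {α : Type*} (ρ π : Equiv.Perm α) : ℤ :=
  (numOrbits ρ : ℤ) + (numOrbits π : ℤ) + (numOrbits (π⁻¹ * ρ) : ℤ) - (Nat.card α : ℤ)

/-- `π` is noncrossing on `ρ`. -/
def IsNoncrossingOn {α : Type*} (π ρ : Equiv.Perm α) : Prop :=
  euler ρ π = 2 * (numJoin π ρ : ℤ)

/-- Euler characteristic of permutations regarded as permutations of a subset `S`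
(for permutations fixing the complement of `S` pointwise). -/
noncomputable def eulerOn {α : Type*} (S : Set α) (ρ π : Equiv.Perm α) : ℤ :=
  ((numOrbits ρ : ℤ) - (Nat.card (Sᶜ : Set α) : ℤ)) +
    ((numOrbits π : ℤ) - (Nat.card (Sᶜ : Set α) : ℤ)) +
    ((numOrbits (π⁻¹ * ρ) : ℤ) - (Nat.card (Sᶜ : Set α) : ℤ)) - (Nat.card (S : Set α) : ℤ)

/-- `π` is noncrossing on `ρ`, both regarded as permutations of the subset `S`. -/
def IsNoncrossingWithin {α : Type*} (S : Set α) (π ρ : Equiv.Perm α) : Prop :=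
  eulerOn S ρ π = 2 * ((numJoin π ρ : ℤ) - (Nat.card (Sᶜ : Set α) : ℤ))

/-- `τ_{p,q} = (1,…,p)(p+1,…,p+q)` as a permutation of `Fin (p+q)`. -/
def tauPQ (p q : ℕ) : Equiv.Perm (Fin (p + q)) :=
  Equiv.permCongr finSumFinEquiv (Equiv.sumCongr (finRotate p) (finRotate q))

/-- Disc-noncrossing permutations: noncrossing on `τ_{p,q}` and the orbit partition
refines that of `τ_{p,q}`. -/
def SDiscNC (p q : ℕ) : Set (Equiv.Perm (Fin (p + q))) :=
  {π | IsNoncrossingOn π (tauPQ p q) ∧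
    ∀ x y : Fin (p + q), π.SameCycle x y → ((x : ℕ) < p ↔ (y : ℕ) < p)}

/-- Annular-noncrossing permutations: noncrossing on `τ_{p,q}` with at least one bridge. -/
def SAnnNC (p q : ℕ) : Set (Equiv.Perm (Fin (p + q))) :=
  {π | IsNoncrossingOn π (tauPQ p q) ∧
    ∃ a b : Fin (p + q), π.SameCycle a b ∧ (a : ℕ) < p ∧ p ≤ (b : ℕ)}

/-- The set of elements lying in bridges of `σ`. -/
def BridgeSet (p q : ℕ) (σ : Equiv.Perm (Fin (p + q))) : Set (Fin (p + q)) :=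
  {x | ∃ a b : Fin (p + q), σ.SameCycle x a ∧ σ.SameCycle x b ∧ (a : ℕ) < p ∧ p ≤ (b : ℕ)}

/-- `π₀` is the permutation induced by `π` on the partition `Π(τ_{p,q})`
(the first–return map of `π` to each of the two sides). -/
def IsPiZero (p q : ℕ) (π π₀ : Equiv.Perm (Fin (p + q))) : Prop :=
  ∀ a : Fin (p + q), ∃ k : ℕ, 0 < k ∧ π₀ a = (π ^ k) a ∧
    (((a : ℕ) < p) ↔ (((π ^ k) a : ℕ) < p)) ∧
    ∀ j : ℕ, 0 < j → j < k → ¬ (((a : ℕ) < p) ↔ (((π ^ j) a : ℕ) < p))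

/-- The order `π ⪯ ρ` for (unhatted) permutations: the orbit partition of `π` refines
that of `ρ` and `π` is noncrossing on `ρ`. -/
def permLe {α : Type*} (π ρ : Equiv.Perm α) : Prop :=
  (∀ x y : α, π.SameCycle x y → ρ.SameCycle x y) ∧ IsNoncrossingOn π ρ

/-- The order relation `π ⪯ ρ̂` in `S_nc-sd(p,q)`, i.e. `Kr(ρ) ⪯ Kr(π)`. -/
def leAnnHat (p q : ℕ) (π ρ : Equiv.Perm (Fin (p + q))) : Prop :=
  permLe (ρ⁻¹ * tauPQ p q) (π⁻¹ * tauPQ p q)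

/-- `σ` is the permutation induced by `π` on the subset `J` (first-return map),
extended by the identity off `J`. -/
def IsInducedOn {α : Type*} (π σ : Equiv.Perm α) (J : Set α) : Prop :=
  (∀ a ∉ J, σ a = a) ∧
  ∀ a ∈ J, ∃ k : ℕ, 0 < k ∧ σ a = (π ^ k) a ∧ (π ^ k) a ∈ J ∧
    ∀ j : ℕ, 0 < j → j < k → (π ^ j) a ∉ J

/-- The size of an orbit of a permutation. -/
noncomputable def orbitSize {α : Type*} (σ : Equiv.Perm α) (c : Quotient (orbitSetoid σ)) : ℕ :=
  Nat.card {x : α // Quotient.mk (orbitSetoid σ) x = c}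

/-- `∏_{U ∈ Π(σ)} (−1)^{|U|−1} C_{|U|−1}`. -/
noncomputable def catProd {α : Type*} (σ : Equiv.Perm α) : ℤ :=
  ∏ᶠ c : Quotient (orbitSetoid σ),
    ((-1 : ℤ) ^ (orbitSize σ c - 1) * (catalan (orbitSize σ c - 1) : ℤ))

/-- The carrier of the poset `S_nc-sd(p,q)`: pairs (permutation, hatted?). -/
def NCSDSet (p q : ℕ) : Set (Equiv.Perm (Fin (p + q)) × Bool) :=
  {z | (z.2 = false ∧ (z.1 ∈ SDiscNC p q ∪ SAnnNC p q)) ∨ (z.2 = true ∧ z.1 ∈ SDiscNC p q)}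

/-- The partial order of `S_nc-sd(p,q)`. -/
def ncsdLe (p q : ℕ) (a b : Equiv.Perm (Fin (p + q)) × Bool) : Prop :=
  (a.2 = false ∧ b.2 = false ∧ permLe a.1 b.1) ∨
  (b.2 = true ∧ permLe (b.1⁻¹ * tauPQ p q) (a.1⁻¹ * tauPQ p q))

end AnnNC

/-!
Write `σ = π⁻¹τ` and `σ₀ = π₀⁻¹τ`. Passing from `π` to its first-return map `π₀` splits every
bridge of `π` into two cycles and changes no other cycle, while `σ₀` agrees with `σ` off the
bridges of `σ`. Feeding these orbit counts into the genus inequality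
`χ_τ(π₀) ≤ 2 #(Π(π₀) ∨ Π(τ)) = 4` (proved by peeling points off cycles with transpositions) and
using `χ_τ(π) = 2` gives
  `#(bridges of π) + #(σ₀-orbits in the bridges of σ) ≤ 2 + #(bridges of σ)`.
The same inequality for `σ⁻¹` on `τ⁻¹`, whose Kreweras complement is `π⁻¹`, holds with the roles
of `π` and `σ` exchanged. Adding the two, and using that the bridges of `σ` (and of `π`) meet both
sides, which first-return maps never join, leaves exactly two `σ₀`-orbits in the bridges of `σ`,
one on each side. The `Kr⁻¹` version is the `Kr` version for `π⁻¹` on `τ⁻¹`.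
-/

namespace AnnNC

open Equiv Equiv.Perm Function

variable {α : Type*}

section Orbits

theorem card_eq_card_of_surjective_of_eq_iff {A B C : Type*} (f : A → B) (k : A → C)
    (hf : Surjective f) (hk : Surjective k) (h : ∀ a a', f a = f a' ↔ k a = k a') :
    Nat.card B = Nat.card C := by
  have hker : Setoid.ker f = Setoid.ker k := Setoid.ext h
  calc Nat.card B = Nat.card (Quotient (Setoid.ker f)) :=
        (Nat.card_congr (Setoid.quotientKerEquivOfSurjective f hf)).symm
    _ = Nat.card (Quotient (Setoid.ker k)) := by rw [hker]
    _ = Nat.card C := Nat.card_congr (Setoid.quotientKerEquivOfSurjective k hk)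

theorem orbitSetoid_le_iff {g : Perm α} {r : Setoid α} :
    orbitSetoid g ≤ r ↔ ∀ z, r z (g z) := by
  refine ⟨fun h z => h ⟨1, by simp⟩, fun h x y => ?_⟩
  rintro ⟨i, rfl⟩
  induction i using Int.induction_on with
  | zero => exact r.refl' x
  | succ i ih => exact r.trans' ih (by rw [add_comm, zpow_add, zpow_one, mul_apply]; exact h _)
  | pred i ih =>
    refine r.trans' ih (r.symm' ?_)
    rw [sub_eq_neg_add, zpow_add, zpow_neg_one, mul_apply]
    simpa using h (g⁻¹ ((g ^ (-(i : ℤ))) x))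

theorem _root_.Equiv.Perm.SameCycle.iff_of_apply_iff {g : Perm α} {s : α → Prop}
    (hg : ∀ z, s (g z) ↔ s z) {x y : α} (h : g.SameCycle x y) : s x ↔ s y :=
  eq_iff_iff.1 (orbitSetoid_le_iff (r := Setoid.ker s) |>.2 (fun z => propext (hg z).symm) h)

theorem orbitSetoid_mul_le (f g : Perm α) :
    orbitSetoid (f * g) ≤ orbitSetoid f ⊔ orbitSetoid g :=
  orbitSetoid_le_iff.2 fun z => Setoid.trans' _
    (le_sup_right (a := orbitSetoid f) (⟨1, by simp⟩ : g.SameCycle z (g z)))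
    (le_sup_left (b := orbitSetoid g) (⟨1, by simp⟩ : f.SameCycle (g z) (f (g z))))

theorem orbitSetoid_inv (g : Perm α) : orbitSetoid g⁻¹ = orbitSetoid g :=
  Setoid.ext fun _ _ => sameCycle_inv

theorem numOrbits_inv (g : Perm α) : numOrbits g⁻¹ = numOrbits g := by
  rw [numOrbits, orbitSetoid_inv, numOrbits]

theorem numOrbits_one : numOrbits (1 : Perm α) = Nat.card α :=
  card_eq_card_of_surjective_of_eq_iff (Quotient.mk _) id Quotient.mk_surjective
    surjective_id fun _ _ => Quotient.eq.trans sameCycle_one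

theorem numOrbits_conj (f g : Perm α) : numOrbits (f * g * f⁻¹) = numOrbits g :=
  Nat.card_congr (Quotient.congr f.symm fun _ _ => sameCycle_conj)

theorem numOrbits_mul_comm (f g : Perm α) : numOrbits (f * g) = numOrbits (g * f) := by
  rw [← numOrbits_conj f (g * f)]
  group

theorem numJoin_eq_numOrbits_of_le {g ρ : Perm α} (h : orbitSetoid g ≤ orbitSetoid ρ) :
    numJoin g ρ = numOrbits ρ := by
  rw [numJoin, sup_eq_right.2 h, numOrbits]

theorem IsNoncrossingOn.inv {g ρ : Perm α} (h : IsNoncrossingOn g ρ) :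
    IsNoncrossingOn g⁻¹ ρ⁻¹ := by
  have hkr : numOrbits (g⁻¹⁻¹ * ρ⁻¹) = numOrbits (g⁻¹ * ρ) := by
    rw [← numOrbits_inv, mul_inv_rev, inv_inv, inv_inv, numOrbits_mul_comm]
  unfold IsNoncrossingOn euler numJoin at *
  rw [numOrbits_inv, numOrbits_inv, hkr, orbitSetoid_inv, orbitSetoid_inv, h]

theorem _root_.Equiv.Perm.SameCycle.mem_of_mapsTo [Finite α] {g : Perm α} {S : Set α}
    (hS : Set.MapsTo g S S) {x y : α} (h : g.SameCycle x y) (hx : x ∈ S) : y ∈ S := by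
  obtain ⟨i, -, rfl⟩ := h.exists_pow_eq'
  rw [← iterate_eq_pow]
  exact hS.iterate i hx

theorem mapsTo_compl [Finite α] {g : Perm α} {S : Set α} (hS : Set.MapsTo g S S) :
    Set.MapsTo g Sᶜ Sᶜ := fun z hz hgz =>
  hz (SameCycle.mem_of_mapsTo hS (⟨-1, by simp⟩ : g.SameCycle (g z) z) hgz)

theorem pow_apply_eq_pow_apply {f g : Perm α} {x : α} {k : ℕ}
    (h : ∀ j < k, f ((g ^ j) x) = g ((g ^ j) x)) : (f ^ k) x = (g ^ k) x := by
  induction k with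
  | zero => rfl
  | succ k ih =>
    rw [pow_succ', mul_apply, ih fun j hj => h j (by omega), h k (by omega), ← mul_apply,
      ← pow_succ']

end Orbits

section PairJoin

def pairSetoid (a b : α) : Setoid α where
  r x y := x = y ∨ (x = a ∧ y = b) ∨ (x = b ∧ y = a)
  iseqv := ⟨fun _ => Or.inl rfl, by aesop, by aesop⟩

theorem pairSetoid_le {s : Setoid α} {a b : α} (h : s a b) : pairSetoid a b ≤ s := by
  rintro x y (rfl | ⟨rfl, rfl⟩ | ⟨rfl, rfl⟩)
  exacts [s.refl' x, h, s.symm' h]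

theorem sup_pairSetoid_iff {s : Setoid α} {a b x y : α} :
    (s ⊔ pairSetoid a b) x y ↔ s x y ∨ (s x a ∧ s b y) ∨ (s x b ∧ s a y) := by
  let t : Setoid α :=
    { r := fun x y => s x y ∨ (s x a ∧ s b y) ∨ (s x b ∧ s a y)
      iseqv := by
        refine ⟨fun x => Or.inl (s.refl' x), ?_, ?_⟩
        · rintro x y (h | ⟨h1, h2⟩ | ⟨h1, h2⟩)
          exacts [Or.inl (s.symm' h), Or.inr (Or.inr ⟨s.symm' h2, s.symm' h1⟩),
            Or.inr (Or.inl ⟨s.symm' h2, s.symm' h1⟩)]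
        · have htr : ∀ {x y z}, s x y → s y z → s x z := s.trans'
          have hsy : ∀ {x y}, s x y → s y x := s.symm'
          rintro x y z (h | ⟨h1, h2⟩ | ⟨h1, h2⟩) (h' | ⟨h1', h2'⟩ | ⟨h1', h2'⟩) <;> tauto }
  refine ⟨fun h => (sup_le (a := s) (b := pairSetoid a b) (c := t) (fun _ _ h => Or.inl h) ?_) h,
    ?_⟩
  · rintro u v (rfl | ⟨rfl, rfl⟩ | ⟨rfl, rfl⟩)
    exacts [Or.inl (s.refl' u), Or.inr (Or.inl ⟨s.refl' _, s.refl' _⟩),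
      Or.inr (Or.inr ⟨s.refl' _, s.refl' _⟩)]
  · have hs : s ≤ s ⊔ pairSetoid a b := le_sup_left
    have hab : (s ⊔ pairSetoid a b) a b := le_sup_right (a := s) (Or.inr (Or.inl ⟨rfl, rfl⟩))
    rintro (h | ⟨h1, h2⟩ | ⟨h1, h2⟩)
    · exact hs h
    · exact Setoid.trans' _ (Setoid.trans' _ (hs h1) hab) (hs h2)
    · exact Setoid.trans' _ (Setoid.trans' _ (hs h1) (Setoid.symm' _ hab)) (hs h2)

theorem card_quotient_le_of_le [Finite α] {r s : Setoid α} (h : r ≤ s) :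
    Nat.card (Quotient s) ≤ Nat.card (Quotient r) :=
  Nat.card_le_card_of_surjective (Quotient.map' id fun _ _ hab => h hab)
    fun c => c.inductionOn fun x => ⟨Quotient.mk r x, rfl⟩

theorem card_quotient_sup_pairSetoid_add_one [Finite α] {s : Setoid α} {a b : α} (hab : ¬ s a b) :
    Nat.card (Quotient (s ⊔ pairSetoid a b)) + 1 = Nat.card (Quotient s) := by
  classical
  -- merging the classes of `a` and `b`: the other classes of `s` map bijectively
  let G : {c : Quotient s // c ≠ Quotient.mk s b} → Quotient (s ⊔ pairSetoid a b) :=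
    fun c => Quotient.map' id (fun _ _ h => le_sup_left (b := pairSetoid a b) h) c.1
  have hG : Bijective G := by
    refine ⟨?_, fun c => c.inductionOn fun z => ?_⟩
    · rintro ⟨x, hx⟩ ⟨y, hy⟩ hxy
      induction x using Quotient.inductionOn
      induction y using Quotient.inductionOn
      rcases sup_pairSetoid_iff.1 (Quotient.exact hxy) with h | ⟨-, h⟩ | ⟨h, -⟩
      · exact Subtype.ext (Quotient.sound h)
      · exact absurd (Quotient.sound (s.symm' h)) hy
      · exact absurd (Quotient.sound h) hx
    · by_cases hz : Quotient.mk s z = Quotient.mk s b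
      · refine ⟨⟨Quotient.mk s a, fun h => hab (Quotient.exact h)⟩, Quotient.sound ?_⟩
        exact sup_pairSetoid_iff.2 (Or.inr (Or.inl ⟨s.refl' a, s.symm' (Quotient.exact hz)⟩))
      · exact ⟨⟨_, hz⟩, rfl⟩
  rw [← Nat.card_eq_of_bijective G hG,
    ← Nat.card_unique (α := {c : Quotient s // c = Quotient.mk s b}), add_comm, ← Nat.card_sum]
  exact Nat.card_congr (Equiv.sumCompl _)

theorem card_quotient_le_card_quotient_sup_pairSetoid_add_one [Finite α] (s : Setoid α) (a b : α) :
    Nat.card (Quotient s) ≤ Nat.card (Quotient (s ⊔ pairSetoid a b)) + 1 := by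
  by_cases hab : s a b
  · rw [sup_eq_left.2 (pairSetoid_le hab)]; omega
  · rw [card_quotient_sup_pairSetoid_add_one hab]

end PairJoin

section Swap

variable [DecidableEq α]

theorem orbitSetoid_swap_le (a b : α) : orbitSetoid (swap a b) ≤ pairSetoid a b :=
  orbitSetoid_le_iff.2 fun z => by
    by_cases hza : z = a
    · exact Or.inr (Or.inl ⟨hza, by rw [hza, swap_apply_left]⟩)
    by_cases hzb : z = b
    · exact Or.inr (Or.inr ⟨hzb, by rw [hzb, swap_apply_right]⟩)
    · exact Or.inl (swap_apply_of_ne_of_ne hza hzb).symm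

theorem sameCycle_swap_mul [Finite α] {g : Perm α} {a b : α} (h : ¬ g.SameCycle a b) :
    (swap a b * g).SameCycle a b := by
  classical
  have hex : ∃ m, 0 < m ∧ (g ^ m) a = a := ⟨orderOf g, orderOf_pos g, by simp [pow_orderOf_eq_one]⟩
  obtain ⟨hm0, hma⟩ := Nat.find_spec hex
  set m := Nat.find hex
  -- before `g` returns to `a`, the transposition acts trivially along the `g`-orbit of `a`
  have hagree : ((swap a b * g) ^ (m - 1)) a = (g ^ (m - 1)) a := by
    refine pow_apply_eq_pow_apply fun j hj => ?_
    rw [mul_apply, ← mul_apply g, ← pow_succ']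
    refine swap_apply_of_ne_of_ne
      (fun hja => Nat.find_min hex (by omega : j + 1 < m) ⟨by omega, hja⟩)
      fun hjb => h ⟨(j + 1 : ℕ), by rw [zpow_natCast, hjb]⟩
  refine ⟨(m : ℤ), ?_⟩
  rw [zpow_natCast, ← Nat.sub_add_cancel hm0, pow_succ', mul_apply, hagree, mul_apply,
    ← mul_apply g, ← pow_succ', Nat.sub_add_cancel hm0, hma, swap_apply_left]

theorem orbitSetoid_swap_mul_le (g : Perm α) (a b : α) :
    orbitSetoid (swap a b * g) ≤ orbitSetoid g ⊔ pairSetoid a b :=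
  (orbitSetoid_mul_le _ _).trans
    (sup_le ((orbitSetoid_swap_le a b).trans le_sup_right) le_sup_left)

theorem orbitSetoid_le_swap_mul (g : Perm α) (a b : α) :
    orbitSetoid g ≤ orbitSetoid (swap a b * g) ⊔ pairSetoid a b := by
  simpa only [← mul_assoc, swap_mul_self, one_mul] using orbitSetoid_swap_mul_le (swap a b * g) a b

theorem orbitSetoid_swap_mul [Finite α] {g : Perm α} {a b : α} (h : ¬ g.SameCycle a b) :
    orbitSetoid (swap a b * g) = orbitSetoid g ⊔ pairSetoid a b := by
  have hpair : pairSetoid a b ≤ orbitSetoid (swap a b * g) :=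
    pairSetoid_le (sameCycle_swap_mul h)
  exact le_antisymm (orbitSetoid_swap_mul_le g a b)
    (sup_le ((orbitSetoid_le_swap_mul g a b).trans (sup_le le_rfl hpair)) hpair)

theorem numOrbits_swap_mul_add_one [Finite α] {g : Perm α} {a b : α} (h : ¬ g.SameCycle a b) :
    numOrbits (swap a b * g) + 1 = numOrbits g := by
  rw [numOrbits, orbitSetoid_swap_mul h]
  exact card_quotient_sup_pairSetoid_add_one h

theorem numOrbits_swap_mul_le [Finite α] (g : Perm α) (a b : α) :
    numOrbits (swap a b * g) ≤ numOrbits g + 1 :=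
  (card_quotient_le_card_quotient_sup_pairSetoid_add_one _ a b).trans
    (Nat.add_le_add_right (card_quotient_le_of_le (orbitSetoid_le_swap_mul g a b)) 1)

end Swap

section Genus

variable [Finite α]

theorem euler_swap_mul_le [DecidableEq α] (ρ g : Perm α) {u v : α} (huv : ¬ g.SameCycle u v)
    (hg : euler ρ g ≤ 2 * numJoin g ρ) :
    euler ρ (swap u v * g) ≤ 2 * numJoin (swap u v * g) ρ := by
  set J := orbitSetoid g ⊔ orbitSetoid ρ
  have hmerge := numOrbits_swap_mul_add_one huv
  have hJ : numJoin (swap u v * g) ρ = Nat.card (Quotient (J ⊔ pairSetoid u v)) := by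
    rw [numJoin, orbitSetoid_swap_mul huv, sup_right_comm]
  have hkr : (swap u v * g)⁻¹ * ρ = swap (g⁻¹ u) (g⁻¹ v) * (g⁻¹ * ρ) := by
    rw [swap_apply_apply, mul_inv_rev, swap_inv]; group
  have hJg : numJoin g ρ = Nat.card (Quotient J) := rfl
  unfold euler at hg ⊢
  rw [hkr]
  by_cases hJuv : J u v
  · rw [hJ, sup_eq_left.2 (pairSetoid_le hJuv)]
    have := numOrbits_swap_mul_le (g⁻¹ * ρ) (g⁻¹ u) (g⁻¹ v)
    omega
  · -- the merge on the `g` side forces a merge on the Kreweras side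
    have hkr_merge : ¬ (g⁻¹ * ρ).SameCycle (g⁻¹ u) (g⁻¹ v) := fun h => by
      have hgJ : orbitSetoid g ≤ J := le_sup_left
      have h' := orbitSetoid_mul_le g⁻¹ ρ h
      rw [orbitSetoid_inv] at h'
      exact hJuv (J.trans' (J.trans' (hgJ ⟨-1, by simp⟩) h') (hgJ ⟨1, by simp⟩))
    have := numOrbits_swap_mul_add_one hkr_merge
    have := card_quotient_sup_pairSetoid_add_one hJuv
    omega

theorem euler_le_two_mul_numJoin (ρ g : Perm α) : euler ρ g ≤ 2 * numJoin g ρ := by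
  classical
  cases nonempty_fintype α
  induction hn : g.support.card using Nat.strong_induction_on generalizing g with
  | _ n ih =>
  by_cases hg : g = 1
  · subst hg
    rw [numJoin_eq_numOrbits_of_le (g := 1) (orbitSetoid_le_iff.2 fun z => ⟨0, rfl⟩), euler,
      inv_one, one_mul, numOrbits_one]
    omega
  · obtain ⟨u, hu⟩ : ∃ u, g u ≠ u := not_forall.1 fun h => hg (Equiv.ext h)
    set g' := swap u (g u) * g
    have hg' : g = swap u (g u) * g' := by rw [← mul_assoc, swap_mul_self, one_mul]
    have hsplit : ¬ g'.SameCycle u (g u) := fun h =>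
      hu (h.eq_of_left (by simp [g', IsFixedPt])).symm
    rw [hg']
    exact euler_swap_mul_le ρ g' hsplit (ih _ (hn ▸ card_support_swap_mul hu) g' rfl)

end Genus

section FirstReturn

/-- `IsPiZero p q π π₀` is definitionally `IsFirstReturn (fun x => (x : ℕ) < p) π π₀`. -/
def IsFirstReturn (s : α → Prop) (g g₀ : Perm α) : Prop :=
  ∀ a, ∃ k, 0 < k ∧ g₀ a = (g ^ k) a ∧ (s a ↔ s ((g ^ k) a)) ∧
    ∀ j, 0 < j → j < k → ¬ (s a ↔ s ((g ^ j) a))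

variable {s : α → Prop} {g g₀ : Perm α}

theorem exists_isFirstReturn [Finite α] (s : α → Prop) (g : Perm α) :
    ∃ g₀, IsFirstReturn s g g₀ := by
  classical
  have hex : ∀ a, ∃ k, 0 < k ∧ (s a ↔ s ((g ^ k) a)) := fun a =>
    ⟨orderOf g, orderOf_pos g, by rw [pow_orderOf_eq_one, one_apply]⟩
  let k a := Nat.find (hex a)
  let f a := (g ^ k a) a
  have hf : Injective f := by
    intro a b hab
    wlog hle : k a ≤ k b generalizing a b
    · exact (this hab.symm (by omega)).symm
    have hback : (g ^ (k b - k a)) b = a := by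
      apply (g ^ k a).injective
      rw [← mul_apply, ← pow_add, Nat.add_sub_cancel' hle]
      exact hab.symm
    by_contra hne
    have hpos : 0 < k b - k a := Nat.pos_of_ne_zero fun h0 => hne <| by
      rw [h0, pow_zero, one_apply] at hback
      exact hback.symm
    have hka : 0 < k a := (Nat.find_spec (hex a)).1
    refine Nat.find_min (hex b) (by omega : k b - k a < k b) ⟨hpos, ?_⟩
    rw [hback]
    have ha := (Nat.find_spec (hex a)).2
    have hb := (Nat.find_spec (hex b)).2
    change s a ↔ s (f a) at ha
    change s b ↔ s (f b) at hb
    rw [hab] at ha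
    exact hb.trans ha.symm
  refine ⟨Equiv.ofBijective f (Finite.injective_iff_bijective.1 hf), fun a =>
    ⟨k a, (Nat.find_spec (hex a)).1, rfl, (Nat.find_spec (hex a)).2, fun j hj hjk hside =>
      Nat.find_min (hex a) hjk ⟨hj, hside⟩⟩⟩

theorem IsFirstReturn.side (h : IsFirstReturn s g g₀) (a : α) : s (g₀ a) ↔ s a := by
  obtain ⟨k, -, heq, hside, -⟩ := h a
  rw [heq]
  exact hside.symm

theorem IsFirstReturn.apply_eq (h : IsFirstReturn s g g₀) {a : α} (ha : s (g a) ↔ s a) :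
    g₀ a = g a := by
  obtain ⟨k, hk0, heq, -, hmin⟩ := h a
  obtain rfl : k = 1 := by
    by_contra hk
    exact hmin 1 one_pos (by omega) (by rw [pow_one]; exact ha.symm)
  rw [heq, pow_one]

theorem IsFirstReturn.inv (h : IsFirstReturn s g g₀) : IsFirstReturn s g⁻¹ g₀⁻¹ := by
  intro a
  obtain ⟨b, rfl⟩ := g₀.surjective a
  obtain ⟨k, hk0, heq, hside, hmin⟩ := h b
  rw [show g₀⁻¹ (g₀ b) = b from g₀.symm_apply_apply b, heq]
  -- walking backwards from `g₀ b` retraces the forward path from `b`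
  have hback : ∀ j ≤ k, (g⁻¹ ^ j) ((g ^ k) b) = (g ^ (k - j)) b := fun j hj => by
    conv_lhs => rw [← Nat.add_sub_cancel' hj, pow_add, mul_apply, inv_pow]
    exact (g ^ j).symm_apply_apply _
  refine ⟨k, hk0, by rw [hback k le_rfl, Nat.sub_self, pow_zero, one_apply], ?_, ?_⟩
  · rw [hback k le_rfl, Nat.sub_self, pow_zero, one_apply]
    exact hside.symm
  · intro j hj hjk hside'
    rw [hback j hjk.le] at hside'
    exact hmin (k - j) (by omega) (by omega) (hside.trans hside')

theorem IsFirstReturn.sameCycle_pow (h : IsFirstReturn s g g₀) (i : ℕ) :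
    ∀ x, (s x ↔ s ((g ^ i) x)) → g₀.SameCycle x ((g ^ i) x) := by
  induction i using Nat.strong_induction_on with
  | _ i ih =>
  intro x hx
  rcases Nat.eq_zero_or_pos i with rfl | hi
  · exact SameCycle.refl _ _
  obtain ⟨k, hk0, heq, hside, hmin⟩ := h x
  have hki : k ≤ i := by
    by_contra hki
    exact hmin i hi (by omega) hx
  have hrest : (g ^ (i - k)) ((g ^ k) x) = (g ^ i) x := by
    rw [← mul_apply, ← pow_add, Nat.sub_add_cancel hki]
  have hstep : g₀.SameCycle x ((g ^ k) x) := ⟨1, by rw [zpow_one, heq]⟩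
  have := ih (i - k) (by omega) ((g ^ k) x) (by rw [hrest]; exact hside.symm.trans hx)
  rw [hrest] at this
  exact hstep.trans this

theorem IsFirstReturn.sameCycle_iff [Finite α] (h : IsFirstReturn s g g₀) {x y : α} :
    g₀.SameCycle x y ↔ g.SameCycle x y ∧ (s x ↔ s y) := by
  refine ⟨fun hxy => ⟨?_, hxy.iff_of_apply_iff h.side⟩, fun ⟨hxy, hside⟩ => ?_⟩
  · refine orbitSetoid_le_iff (r := orbitSetoid g) |>.2 (fun z => ?_) hxy
    obtain ⟨k, -, heq, -⟩ := h z
    exact ⟨k, by rw [heq, zpow_natCast]⟩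
  · obtain ⟨i, -, rfl⟩ := hxy.exists_pow_eq'
    exact h.sameCycle_pow i x hside

theorem IsFirstReturn.inv_mul_apply (h : IsFirstReturn s g g₀) {ρ : Perm α}
    (hρ : ∀ z, s (ρ z) ↔ s z) {y : α} (hy : s ((g⁻¹ * ρ) y) ↔ s y) :
    (g₀⁻¹ * ρ) y = (g⁻¹ * ρ) y := by
  have hg : g ((g⁻¹ * ρ) y) = ρ y := by simp
  rw [mul_apply, inv_eq_iff_eq, h.apply_eq (by rw [hg, hρ]; exact hy.symm), hg]

end FirstReturn

section OrbitsMeeting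

noncomputable def numOrbitsMeeting (g : Perm α) (S : Set α) : ℕ :=
  (Quotient.mk (orbitSetoid g) '' S).ncard

theorem numOrbitsMeeting_inv (g : Perm α) (S : Set α) :
    numOrbitsMeeting g⁻¹ S = numOrbitsMeeting g S := by
  rw [numOrbitsMeeting, orbitSetoid_inv, numOrbitsMeeting]

variable [Finite α] {g g' : Perm α} {S : Set α}

theorem numOrbitsMeeting_union {B C : Set α} (hB : Set.MapsTo g B B) (hBC : Disjoint B C) :
    numOrbitsMeeting g (B ∪ C) = numOrbitsMeeting g B + numOrbitsMeeting g C := by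
  refine (congrArg Set.ncard (Set.image_union _ B C)).trans (Set.ncard_union_eq ?_)
  rw [Set.disjoint_left]
  rintro _ ⟨x, hx, rfl⟩ ⟨y, hy, hyx⟩
  exact Set.disjoint_left.1 hBC (SameCycle.mem_of_mapsTo hB (Quotient.exact hyx).symm hx) hy

theorem numOrbits_eq_add_numOrbitsMeeting (hS : Set.MapsTo g S S) :
    numOrbits g = numOrbitsMeeting g S + numOrbitsMeeting g Sᶜ := by
  rw [← numOrbitsMeeting_union hS disjoint_compl_right, Set.union_compl_self, numOrbitsMeeting,
    Set.image_univ, Quotient.mk_surjective.range_eq, Set.ncard_univ, numOrbits]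

theorem sameCycle_iff_of_eqOn (hS : Set.MapsTo g S S) (heq : Set.EqOn g g' S) {x y : α}
    (hx : x ∈ S) : g.SameCycle x y ↔ g'.SameCycle x y := by
  have hpow : ∀ i : ℕ, (g ^ i) x = (g' ^ i) x := fun i => (pow_apply_eq_pow_apply fun j _ =>
    (heq (by rw [← iterate_eq_pow]; exact hS.iterate j hx)).symm).symm
  refine ⟨fun h => ?_, fun h => ?_⟩ <;> obtain ⟨i, -, rfl⟩ := h.exists_pow_eq'
  · exact ⟨i, by rw [zpow_natCast, hpow]⟩
  · exact ⟨i, by rw [zpow_natCast, hpow]⟩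

theorem numOrbitsMeeting_congr (hS : Set.MapsTo g S S) (heq : Set.EqOn g g' S) :
    numOrbitsMeeting g S = numOrbitsMeeting g' S := by
  rw [numOrbitsMeeting, numOrbitsMeeting, ← Nat.card_coe_set_eq, ← Nat.card_coe_set_eq]
  refine card_eq_card_of_surjective_of_eq_iff (S.imageFactorization (Quotient.mk _))
    (S.imageFactorization (Quotient.mk _)) Set.imageFactorization_surjective
    Set.imageFactorization_surjective fun ⟨x, hx⟩ ⟨y, _⟩ => ?_
  simp only [Set.imageFactorization, Subtype.mk.injEq, Quotient.eq]
  exact sameCycle_iff_of_eqOn hS heq hx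

theorem two_le_numOrbitsMeeting {a b : α} (ha : a ∈ S) (hb : b ∈ S) (hab : ¬ g.SameCycle a b) :
    2 ≤ numOrbitsMeeting g S :=
  (Set.one_lt_ncard_iff (Set.toFinite _)).2
    ⟨_, _, ⟨a, ha, rfl⟩, ⟨b, hb, rfl⟩, fun h => hab (Quotient.exact h)⟩

theorem sameCycle_or_sameCycle_of_numOrbitsMeeting_le_two (h : numOrbitsMeeting g S ≤ 2)
    {a b x : α} (ha : a ∈ S) (hb : b ∈ S) (hab : ¬ g.SameCycle a b) (hx : x ∈ S) :
    g.SameCycle a x ∨ g.SameCycle b x := by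
  by_contra! hax
  have h3 : 2 < (Quotient.mk (orbitSetoid g) '' S).ncard :=
    (Set.two_lt_ncard_iff (Set.toFinite _)).2 ⟨_, _, _, ⟨a, ha, rfl⟩, ⟨b, hb, rfl⟩, ⟨x, hx, rfl⟩,
      fun h => hab (Quotient.exact h), fun h => hax.1 (Quotient.exact h),
      fun h => hax.2 (Quotient.exact h)⟩
  exact absurd h (not_le.2 h3)

end OrbitsMeeting

section Crossing

variable {s : α → Prop} {g g₀ ρ : Perm α}

/-- The union of the bridges of `g`. -/
def crossingSet (s : α → Prop) (g : Perm α) : Set α :=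
  {x | ∃ a b, g.SameCycle x a ∧ g.SameCycle x b ∧ s a ∧ ¬ s b}

theorem crossingSet_inv (s : α → Prop) (g : Perm α) : crossingSet s g⁻¹ = crossingSet s g := by
  simp only [crossingSet, sameCycle_inv]

theorem _root_.Equiv.Perm.SameCycle.mem_crossingSet {x y : α} (hxy : g.SameCycle x y)
    (hx : x ∈ crossingSet s g) : y ∈ crossingSet s g := by
  obtain ⟨a, b, hxa, hxb, ha, hb⟩ := hx
  exact ⟨a, b, hxy.symm.trans hxa, hxy.symm.trans hxb, ha, hb⟩

theorem mapsTo_crossingSet (s : α → Prop) (g : Perm α) :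
    Set.MapsTo g (crossingSet s g) (crossingSet s g) := fun _ hx =>
  SameCycle.mem_crossingSet ⟨1, by simp⟩ hx

theorem mem_crossingSet_of_sameCycle {a b : α} (hab : g.SameCycle a b) (ha : s a) (hb : ¬ s b) :
    a ∈ crossingSet s g ∧ b ∈ crossingSet s g :=
  ⟨⟨a, b, .refl _ _, hab, ha, hb⟩, ⟨a, b, hab.symm, .refl _ _, ha, hb⟩⟩

theorem mem_crossingSet_of_not_iff {x : α} (hx : ¬ (s (g x) ↔ s x)) : x ∈ crossingSet s g := by
  have hgx : g.SameCycle x (g x) := ⟨1, by simp⟩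
  by_cases h : s x
  · exact (mem_crossingSet_of_sameCycle hgx h (by tauto)).1
  · exact (mem_crossingSet_of_sameCycle hgx.symm (by tauto) h).2

theorem iff_of_notMem_crossingSet {x : α} (hx : x ∉ crossingSet s g) : s (g x) ↔ s x :=
  not_not.1 (mt mem_crossingSet_of_not_iff hx)

theorem IsFirstReturn.side_inv_mul (h : IsFirstReturn s g g₀) (hρ : ∀ z, s (ρ z) ↔ s z)
    (z : α) : s ((g₀⁻¹ * ρ) z) ↔ s z := by
  have hz : g₀ ((g₀⁻¹ * ρ) z) = ρ z := g₀.apply_symm_apply _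
  rw [← h.side, hz, hρ]

theorem exists_not_iff_inv_mul_apply (hρ : ∀ z, s (ρ z) ↔ s z) {a b : α}
    (hab : g.SameCycle a b) (ha : s a) (hb : ¬ s b) : ∃ y, ¬ (s ((g⁻¹ * ρ) y) ↔ s y) := by
  by_contra! hσ
  have hg : ∀ z, s (g z) ↔ s z := fun z => by
    simpa using (hρ (ρ⁻¹ (g z))).trans (hσ (ρ⁻¹ (g z))).symm
  exact hb ((hab.iff_of_apply_iff hg).1 ha)

def HasOutsideFaces (s : α → Prop) (σ σ₀ : Perm α) : Prop :=
  ∃ u v, s u ∧ ¬ s v ∧ (∀ x, σ₀.SameCycle u x → s x) ∧ (∀ x, σ₀.SameCycle v x → ¬ s x) ∧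
    crossingSet s σ = {x | σ₀.SameCycle u x} ∪ {x | σ₀.SameCycle v x}

theorem HasOutsideFaces.inv {σ σ₀ : Perm α} (h : HasOutsideFaces s σ σ₀) :
    HasOutsideFaces s σ⁻¹ σ₀⁻¹ := by
  simpa only [HasOutsideFaces, crossingSet_inv, sameCycle_inv] using h

variable [Finite α]

theorem IsFirstReturn.numOrbitsMeeting_crossingSet (h : IsFirstReturn s g g₀) :
    numOrbitsMeeting g₀ (crossingSet s g) = 2 * numOrbitsMeeting g (crossingSet s g) := by
  classical
  set X := crossingSet s g
  rw [numOrbitsMeeting, numOrbitsMeeting, ← Nat.card_coe_set_eq, ← Nat.card_coe_set_eq,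
    card_eq_card_of_surjective_of_eq_iff (X.imageFactorization (Quotient.mk _))
      (fun x => (X.imageFactorization (Quotient.mk (orbitSetoid g)) x, decide (s x)))
      Set.imageFactorization_surjective ?_ ?_,
    Nat.card_prod, Nat.card_eq_fintype_card (α := Bool), Fintype.card_bool, mul_comm]
  · -- every orbit of `g` in `X` meets both sides
    rintro ⟨⟨_, y, ⟨a, b, hya, hyb, ha, hb⟩, rfl⟩, t⟩
    have hX := mem_crossingSet_of_sameCycle (hya.symm.trans hyb) ha hb
    cases t
    · exact ⟨⟨b, hX.2⟩, Prod.ext (Subtype.ext (Quotient.sound hyb.symm)) (by simp [hb])⟩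
    · exact ⟨⟨a, hX.1⟩, Prod.ext (Subtype.ext (Quotient.sound hya.symm)) (by simp [ha])⟩
  · rintro ⟨x, _⟩ ⟨y, _⟩
    simp only [Set.imageFactorization, Subtype.mk.injEq, Prod.mk.injEq, Quotient.eq,
      decide_eq_decide]
    exact h.sameCycle_iff

theorem IsFirstReturn.numOrbits_eq_add (h : IsFirstReturn s g g₀) :
    numOrbits g₀ = numOrbits g + numOrbitsMeeting g (crossingSet s g) := by
  set X := crossingSet s g
  have hX₀ : Set.MapsTo g₀ X X := fun x hx =>
    SameCycle.mem_crossingSet (h.sameCycle_iff.1 ⟨1, by simp⟩).1 hx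
  have hagree : Set.EqOn g₀ g Xᶜ := fun x hx => h.apply_eq (iff_of_notMem_crossingSet hx)
  rw [numOrbits_eq_add_numOrbitsMeeting (mapsTo_crossingSet s g),
    numOrbits_eq_add_numOrbitsMeeting hX₀, numOrbitsMeeting_congr (mapsTo_compl hX₀) hagree,
    h.numOrbitsMeeting_crossingSet]
  ring

theorem IsFirstReturn.mapsTo_compl_crossingSet_inv_mul (h : IsFirstReturn s g g₀)
    (hρ : ∀ z, s (ρ z) ↔ s z) :
    Set.MapsTo (g₀⁻¹ * ρ) (crossingSet s (g⁻¹ * ρ))ᶜ (crossingSet s (g⁻¹ * ρ))ᶜ := fun y hy => by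
  rw [h.inv_mul_apply hρ (iff_of_notMem_crossingSet hy)]
  exact mapsTo_compl (mapsTo_crossingSet _ _) hy

theorem IsFirstReturn.numOrbits_inv_mul_add_numOrbitsMeeting (h : IsFirstReturn s g g₀)
    (hρ : ∀ z, s (ρ z) ↔ s z) :
    numOrbits (g₀⁻¹ * ρ) + numOrbitsMeeting (g⁻¹ * ρ) (crossingSet s (g⁻¹ * ρ)) =
      numOrbits (g⁻¹ * ρ) + numOrbitsMeeting (g₀⁻¹ * ρ) (crossingSet s (g⁻¹ * ρ)) := by
  set Y := crossingSet s (g⁻¹ * ρ)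
  have hY₀ := h.mapsTo_compl_crossingSet_inv_mul hρ
  have hagree : Set.EqOn (g₀⁻¹ * ρ) (g⁻¹ * ρ) Yᶜ := fun y hy =>
    h.inv_mul_apply hρ (iff_of_notMem_crossingSet hy)
  have h₀ := numOrbits_eq_add_numOrbitsMeeting hY₀
  have h₁ := numOrbits_eq_add_numOrbitsMeeting (mapsTo_compl (mapsTo_crossingSet s (g⁻¹ * ρ)))
  rw [compl_compl] at h₀ h₁
  rw [h₀, h₁, numOrbitsMeeting_congr hY₀ hagree]
  ring

end Crossing

section TwoSides

variable {s : α → Prop} {g g₀ ρ : Perm α} {a b : α}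

theorem apply_iff_of_sameCycle_iff (hρ : ∀ x y, ρ.SameCycle x y ↔ (s x ↔ s y)) (z : α) :
    s (ρ z) ↔ s z :=
  ((hρ z (ρ z)).1 ⟨1, by simp⟩).symm

theorem numOrbits_eq_two (hρ : ∀ x y, ρ.SameCycle x y ↔ (s x ↔ s y)) (ha : s a) (hb : ¬ s b) :
    numOrbits ρ = 2 := by
  classical
  rw [numOrbits, card_eq_card_of_surjective_of_eq_iff (Quotient.mk _) (fun x => decide (s x))
    Quotient.mk_surjective ?_ fun x y => ?_, Nat.card_eq_fintype_card, Fintype.card_bool]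
  · rintro (_ | _)
    exacts [⟨b, by simp [hb]⟩, ⟨a, by simp [ha]⟩]
  · rw [Quotient.eq, decide_eq_decide]
    exact hρ x y

theorem numJoin_eq_one (hρ : ∀ x y, ρ.SameCycle x y ↔ (s x ↔ s y)) (hab : g.SameCycle a b)
    (ha : s a) (hb : ¬ s b) : numJoin g ρ = 1 := by
  set J := orbitSetoid g ⊔ orbitSetoid ρ
  have hρJ : orbitSetoid ρ ≤ J := le_sup_right
  have hall : ∀ x, J x a := fun x => by
    by_cases hx : s x
    · exact hρJ ((hρ x a).2 (iff_of_true hx ha))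
    · exact J.trans' (hρJ ((hρ x b).2 (iff_of_false hx hb)))
        (le_sup_left (b := orbitSetoid ρ) hab.symm)
  refine Nat.card_eq_one_iff_unique.2 ⟨⟨fun c d => ?_⟩, ⟨Quotient.mk _ a⟩⟩
  induction c using Quotient.inductionOn
  induction d using Quotient.inductionOn
  exact Quotient.sound (J.trans' (hall _) (J.symm' (hall _)))

theorem IsNoncrossingOn.numOrbits_add_numOrbits (hnc : IsNoncrossingOn g ρ)
    (hρ : ∀ x y, ρ.SameCycle x y ↔ (s x ↔ s y)) (hab : g.SameCycle a b) (ha : s a) (hb : ¬ s b) :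
    numOrbits g + numOrbits (g⁻¹ * ρ) = Nat.card α := by
  have h2 := numOrbits_eq_two hρ ha hb
  have h1 := numJoin_eq_one hρ hab ha hb
  unfold IsNoncrossingOn euler at hnc
  omega

variable [Finite α]

/-- The genus bound for `g₀` on `ρ`, with the orbit counts of `g₀` and `g₀⁻¹ ρ` expressed
through those of `g` and `g⁻¹ ρ`. -/
theorem IsFirstReturn.numOrbitsMeeting_crossingSet_add_le (h : IsFirstReturn s g g₀)
    (hρ : ∀ x y, ρ.SameCycle x y ↔ (s x ↔ s y)) (hρ2 : numOrbits ρ = 2)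
    (hsum : numOrbits g + numOrbits (g⁻¹ * ρ) = Nat.card α) :
    numOrbitsMeeting g (crossingSet s g) +
        numOrbitsMeeting (g₀⁻¹ * ρ) (crossingSet s (g⁻¹ * ρ)) ≤
      2 + numOrbitsMeeting (g⁻¹ * ρ) (crossingSet s (g⁻¹ * ρ)) := by
  have hρside := apply_iff_of_sameCycle_iff hρ
  have hgenus := euler_le_two_mul_numJoin ρ g₀
  rw [numJoin_eq_numOrbits_of_le (orbitSetoid_le_iff.2 fun z => (hρ z (g₀ z)).2 (h.side z).symm)]
    at hgenus
  have h₀ := h.numOrbits_eq_add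
  have h₁ := h.numOrbits_inv_mul_add_numOrbitsMeeting hρside
  unfold euler at hgenus
  omega


theorem IsNoncrossingOn.numOrbitsMeeting_crossingSet_le_two (hnc : IsNoncrossingOn g ρ)
    (hρ : ∀ x y, ρ.SameCycle x y ↔ (s x ↔ s y)) (hab : g.SameCycle a b) (ha : s a) (hb : ¬ s b)
    (h : IsFirstReturn s g g₀) :
    numOrbitsMeeting (g₀⁻¹ * ρ) (crossingSet s (g⁻¹ * ρ)) ≤ 2 := by
  have hρ2 := numOrbits_eq_two hρ ha hb
  have hsum := hnc.numOrbits_add_numOrbits hρ hab ha hb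
  -- `(g⁻¹ ρ)⁻¹` on `ρ⁻¹` has Kreweras complement `g⁻¹`, so its inequality reverses the one for `g`
  have hρ' : ∀ x y, ρ⁻¹.SameCycle x y ↔ (s x ↔ s y) := fun x y => sameCycle_inv.trans (hρ x y)
  have hkr : (g⁻¹ * ρ)⁻¹⁻¹ * ρ⁻¹ = g⁻¹ := by group
  obtain ⟨g₁, h₁⟩ := exists_isFirstReturn s (g⁻¹ * ρ)⁻¹
  have h1 := h.numOrbitsMeeting_crossingSet_add_le hρ hρ2 hsum
  have h2 := h₁.numOrbitsMeeting_crossingSet_add_le hρ' (by rwa [numOrbits_inv])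
    (by rw [hkr, numOrbits_inv, numOrbits_inv]; omega)
  rw [hkr] at h2
  simp only [crossingSet_inv, numOrbitsMeeting_inv] at h2
  have hab₁ : ¬ (g₁⁻¹ * ρ⁻¹).SameCycle a b := fun h' =>
    hb ((h'.iff_of_apply_iff (h₁.side_inv_mul (apply_iff_of_sameCycle_iff hρ'))).1 ha)
  have := two_le_numOrbitsMeeting (mem_crossingSet_of_sameCycle hab ha hb).1
    (mem_crossingSet_of_sameCycle hab ha hb).2 hab₁
  omega

theorem IsNoncrossingOn.hasOutsideFaces (hnc : IsNoncrossingOn g ρ)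
    (hρ : ∀ x y, ρ.SameCycle x y ↔ (s x ↔ s y)) (hab : g.SameCycle a b) (ha : s a) (hb : ¬ s b)
    (h : IsFirstReturn s g g₀) : HasOutsideFaces s (g⁻¹ * ρ) (g₀⁻¹ * ρ) := by
  set Y := crossingSet s (g⁻¹ * ρ)
  have hρside := apply_iff_of_sameCycle_iff hρ
  have hside := h.side_inv_mul hρside
  obtain ⟨u, v, hu, hv, huY, hvY⟩ : ∃ u v, s u ∧ ¬ s v ∧ u ∈ Y ∧ v ∈ Y := by
    obtain ⟨y, hy⟩ := exists_not_iff_inv_mul_apply hρside hab ha hb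
    have hyY := mem_crossingSet_of_not_iff hy
    by_cases hys : s y
    · exact ⟨y, _, hys, by tauto, hyY, mapsTo_crossingSet s _ hyY⟩
    · exact ⟨_, y, by tauto, hys, mapsTo_crossingSet s _ hyY, hyY⟩
  have huv : ¬ (g₀⁻¹ * ρ).SameCycle u v := fun h' => hv ((h'.iff_of_apply_iff hside).1 hu)
  have hY : Set.MapsTo (g₀⁻¹ * ρ) Y Y := by
    simpa only [compl_compl] using mapsTo_compl (h.mapsTo_compl_crossingSet_inv_mul hρside)
  refine ⟨u, v, hu, hv, fun x hx => (hx.iff_of_apply_iff hside).1 hu,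
    fun x hx hxs => hv ((hx.iff_of_apply_iff hside).2 hxs), Set.ext fun x => ⟨fun hx => ?_, ?_⟩⟩
  · exact sameCycle_or_sameCycle_of_numOrbitsMeeting_le_two
      (hnc.numOrbitsMeeting_crossingSet_le_two hρ hab ha hb h) huY hvY huv hx
  · rintro (hx | hx)
    exacts [SameCycle.mem_of_mapsTo hY hx huY, SameCycle.mem_of_mapsTo hY hx hvY]

end TwoSides

section Annulus

variable {p q : ℕ}

theorem tauPQ_pow (k : ℕ) :
    tauPQ p q ^ k = finSumFinEquiv.permCongr ((finRotate p ^ k).sumCongr (finRotate q ^ k)) := by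
  have := map_pow (finSumFinEquiv.permCongrHom.toMonoidHom.comp (sumCongrHom (Fin p) (Fin q)))
    (finRotate p, finRotate q) k
  simpa [tauPQ] using this.symm

theorem tauPQ_pow_castAdd (k : ℕ) (i : Fin p) :
    (tauPQ p q ^ k) (Fin.castAdd q i) = Fin.castAdd q ((finRotate p ^ k) i) := by
  simp [tauPQ_pow]

theorem tauPQ_pow_natAdd (k : ℕ) (j : Fin q) :
    (tauPQ p q ^ k) (Fin.natAdd p j) = Fin.natAdd p ((finRotate q ^ k) j) := by
  simp [tauPQ_pow]

theorem sameCycle_finRotate (n : ℕ) (i j : Fin n) : (finRotate n).SameCycle i j := by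
  rcases lt_or_ge n 2 with hn | hn
  · have : Subsingleton (Fin n) := Fin.subsingleton_iff_le_one.2 (by omega)
    rw [Subsingleton.elim i j]
  · have hmem : ∀ x, finRotate n x ≠ x := fun x =>
      mem_support.1 (by rw [support_finRotate_of_le hn]; exact Finset.mem_univ x)
    exact (isCycle_finRotate_of_le hn).sameCycle (hmem i) (hmem j)

theorem tauPQ_side (x : Fin (p + q)) : (tauPQ p q x : ℕ) < p ↔ (x : ℕ) < p := by
  induction x using Fin.addCases with
  | left i =>
    rw [← pow_one (tauPQ p q), tauPQ_pow_castAdd]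
    simp
  | right j =>
    rw [← pow_one (tauPQ p q), tauPQ_pow_natAdd]
    simp

theorem sameCycle_tauPQ_iff (x y : Fin (p + q)) :
    (tauPQ p q).SameCycle x y ↔ ((x : ℕ) < p ↔ (y : ℕ) < p) := by
  refine ⟨fun h => h.iff_of_apply_iff (s := fun x : Fin (p + q) => (x : ℕ) < p) tauPQ_side,
    fun hxy => ?_⟩
  induction x using Fin.addCases with
  | left i =>
    induction y using Fin.addCases with
    | left i' =>
      obtain ⟨k, -, hk⟩ := (sameCycle_finRotate p i i').exists_pow_eq'
      exact ⟨k, by rw [zpow_natCast, tauPQ_pow_castAdd, hk]⟩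
    | right j' => simp at hxy
  | right j =>
    induction y using Fin.addCases with
    | left i' => simp at hxy
    | right j' =>
      obtain ⟨k, -, hk⟩ := (sameCycle_finRotate q j j').exists_pow_eq'
      exact ⟨k, by rw [zpow_natCast, tauPQ_pow_natAdd, hk]⟩

theorem bridgeSet_eq_crossingSet (σ : Equiv.Perm (Fin (p + q))) :
    BridgeSet p q σ = crossingSet (fun x : Fin (p + q) => (x : ℕ) < p) σ := by
  simp only [BridgeSet, crossingSet, not_lt]

theorem HasOutsideFaces.bridgeSet {σ σ₀ : Equiv.Perm (Fin (p + q))}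
    (h : HasOutsideFaces (fun x : Fin (p + q) => (x : ℕ) < p) σ σ₀) :
    ∃ u v : Fin (p + q), (u : ℕ) < p ∧ p ≤ (v : ℕ) ∧
      (∀ x, σ₀.SameCycle u x → (x : ℕ) < p) ∧ (∀ x, σ₀.SameCycle v x → p ≤ (x : ℕ)) ∧
      BridgeSet p q σ = {x | σ₀.SameCycle u x} ∪ {x | σ₀.SameCycle v x} := by
  obtain ⟨u, v, hu, hv, hU, hV, hX⟩ := h
  exact ⟨u, v, hu, not_lt.1 hv, hU, fun x hx => not_lt.1 (hV x hx),
    (bridgeSet_eq_crossingSet σ).trans hX⟩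

end Annulus

end AnnNC

open AnnNC in
theorem stmt2_general (p q : ℕ) (π : Equiv.Perm (Fin (p + q)))
    (hπ : π ∈ SAnnNC p q) (π₀ : Equiv.Perm (Fin (p + q))) (hπ₀ : IsPiZero p q π π₀) :
    (∃ u v : Fin (p + q), (u : ℕ) < p ∧ p ≤ (v : ℕ) ∧
        (∀ x, (π₀⁻¹ * tauPQ p q).SameCycle u x → (x : ℕ) < p) ∧
        (∀ x, (π₀⁻¹ * tauPQ p q).SameCycle v x → p ≤ (x : ℕ)) ∧
        BridgeSet p q (π⁻¹ * tauPQ p q) =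
          {x | (π₀⁻¹ * tauPQ p q).SameCycle u x} ∪ {x | (π₀⁻¹ * tauPQ p q).SameCycle v x}) ∧
    (∃ u v : Fin (p + q), (u : ℕ) < p ∧ p ≤ (v : ℕ) ∧
        (∀ x, (tauPQ p q * π₀⁻¹).SameCycle u x → (x : ℕ) < p) ∧
        (∀ x, (tauPQ p q * π₀⁻¹).SameCycle v x → p ≤ (x : ℕ)) ∧
        BridgeSet p q (tauPQ p q * π⁻¹) =
          {x | (tauPQ p q * π₀⁻¹).SameCycle u x} ∪ {x | (tauPQ p q * π₀⁻¹).SameCycle v x}) ∧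
    (∀ a : Fin (p + q),
        (((a : ℕ) < p ∧ p ≤ ((π⁻¹ a : ℕ))) ∨ (p ≤ (a : ℕ) ∧ ((π⁻¹ a : ℕ)) < p)) →
        a ∈ BridgeSet p q (tauPQ p q * π⁻¹)) := by
  obtain ⟨hnc, a, b, hab, ha, hb⟩ := hπ
  have hπ₀' : IsFirstReturn (fun x : Fin (p + q) => (x : ℕ) < p) π π₀ := hπ₀
  have hb' : ¬ (b : ℕ) < p := not_lt.2 hb
  have hτ := sameCycle_tauPQ_iff (p := p) (q := q)
  have hτ' : ∀ x y, (tauPQ p q)⁻¹.SameCycle x y ↔ ((x : ℕ) < p ↔ (y : ℕ) < p) :=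
    fun x y => Equiv.Perm.sameCycle_inv.trans (hτ x y)
  -- the `Kr⁻¹` statement is the `Kr` statement for `π⁻¹` on `τ⁻¹`, inverted
  have hkr : HasOutsideFaces (fun x : Fin (p + q) => (x : ℕ) < p)
      (tauPQ p q * π⁻¹) (tauPQ p q * π₀⁻¹) := by
    have := (hnc.inv.hasOutsideFaces hτ' (Equiv.Perm.sameCycle_inv.2 hab) ha hb' hπ₀'.inv).inv
    rwa [mul_inv_rev, inv_inv, inv_inv, mul_inv_rev, inv_inv, inv_inv] at this
  refine ⟨(hnc.hasOutsideFaces hτ hab ha hb' hπ₀').bridgeSet, hkr.bridgeSet, fun x hx => ?_⟩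
  rw [bridgeSet_eq_crossingSet]
  refine mem_crossingSet_of_not_iff ?_
  rw [Equiv.Perm.mul_apply, tauPQ_side]
  omega

open AnnNC in
/-- the elements lying in bridges of `Kr(π) = π⁻¹τ` (resp. `Kr⁻¹(π) = τπ⁻¹`)
form exactly two orbits of `Kr(π₀)` (resp. `Kr⁻¹(π₀)`), one contained in `[p]` and one in
`[p+1,p+q]` (the outside faces); moreover every `a` with `π⁻¹(a)` on the opposite side of
the annulus lies in the set of elements of bridges of `Kr⁻¹(π)`. -/
theorem stmt2 (p q : ℕ) (hp : 1 ≤ p) (hq : 1 ≤ q) (π : Equiv.Perm (Fin (p + q)))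
    (hπ : π ∈ SAnnNC p q) (π₀ : Equiv.Perm (Fin (p + q))) (hπ₀ : IsPiZero p q π π₀) :
    (∃ u v : Fin (p + q), (u : ℕ) < p ∧ p ≤ (v : ℕ) ∧
        (∀ x, (π₀⁻¹ * tauPQ p q).SameCycle u x → (x : ℕ) < p) ∧
        (∀ x, (π₀⁻¹ * tauPQ p q).SameCycle v x → p ≤ (x : ℕ)) ∧
        BridgeSet p q (π⁻¹ * tauPQ p q) =
          {x | (π₀⁻¹ * tauPQ p q).SameCycle u x} ∪ {x | (π₀⁻¹ * tauPQ p q).SameCycle v x}) ∧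
    (∃ u v : Fin (p + q), (u : ℕ) < p ∧ p ≤ (v : ℕ) ∧
        (∀ x, (tauPQ p q * π₀⁻¹).SameCycle u x → (x : ℕ) < p) ∧
        (∀ x, (tauPQ p q * π₀⁻¹).SameCycle v x → p ≤ (x : ℕ)) ∧
        BridgeSet p q (tauPQ p q * π⁻¹) =
          {x | (tauPQ p q * π₀⁻¹).SameCycle u x} ∪ {x | (tauPQ p q * π₀⁻¹).SameCycle v x}) ∧
    (∀ a : Fin (p + q),
        (((a : ℕ) < p ∧ p ≤ ((π⁻¹ a : ℕ))) ∨ (p ≤ (a : ℕ) ∧ ((π⁻¹ a : ℕ)) < p)) →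
        a ∈ BridgeSet p q (tauPQ p q * π⁻¹)) :=
  stmt2_general p q π hπ π₀ hπ₀
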